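/- Define the co-occurrence update operator U on functions C : D → ℝ by U(C)(η) = ∑_{ξ : E(ξ), T⁰ξ = η} (1-p)·C(ξ) + ∑_{ξ : E(ξ), T¹ξ = η} p·C(ξ) + ∑_{ξ : ¬E(ξ), Tᵠξ = η} C(ξ). Then for all k ≥ 0 and any initial distribution C₀ : D → ℝ, the stage-k weighted sum computed from the updated co-occurrence matrix equals the tree-based estimate: ∑_{ξ ∈ D} (U^k C₀)(ξ)·w(ξ) = ∑_{ξ ∈ D} C₀(ξ)·E_k(ξ), where E_k is the recursive stage-wise expectation. -/
import Mathlib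


/-- Trajectory of a pixel pair `ξ` under choice sequence `c`: at an embeddable
state move via `T1`/`T0` according to the choice bit, else via `Tp`. -/
def traj {D : Type*} (Emb : D → Bool) (T0 T1 Tp : D → D) (ξ : D) (c : ℕ → Bool) : ℕ → D
  | 0 => ξ
  | k + 1 =>
    let x := traj Emb T0 T1 Tp ξ c k
    if Emb x then (if c k then T1 x else T0 x) else Tp x

/-- The transition probability contributed by the `m`-th step of the path. -/
def stepP {D : Type*} (Emb : D → Bool) (T0 T1 Tp : D → D) (p : ℝ) (ξ : D)
    (c : ℕ → Bool) (m : ℕ) : ℝ :=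
  if Emb (traj Emb T0 T1 Tp ξ c m) then (if c m then p else 1 - p) else 1

/-- Canonical choice sequences: the choice bit is `false` at non-embeddable states,
so canonical sequences are in bijection with admissible paths of the pixel-pair tree. -/
def canonical {D : Type*} (Emb : D → Bool) (T0 T1 Tp : D → D) (ξ : D)
    (c : ℕ → Bool) (n : ℕ) : Prop :=
  ∀ m < n, Emb (traj Emb T0 T1 Tp ξ c m) = false → c m = false

/-- Extend a finite choice vector by `false`. -/
def ext {k : ℕ} (c : Fin k → Bool) : ℕ → Bool := fun m => if h : m < k then c ⟨m, h⟩ else false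

/-- Stage-wise expectation `E_k`. -/
noncomputable def Estage {D : Type*} (Emb : D → Bool) (T0 T1 Tp : D → D)
    (w : D → ℝ) (p : ℝ) : ℕ → D → ℝ
  | 0 => w
  | k + 1 => fun ξ =>
    if Emb ξ then
      (1 - p) * Estage Emb T0 T1 Tp w p k (T0 ξ) + p * Estage Emb T0 T1 Tp w p k (T1 ξ)
    else Estage Emb T0 T1 Tp w p k (Tp ξ)

/-- `EtotAux n = Ê_{n+1}`, the total expectation over `n+1` passes. -/
noncomputable def EtotAux {D : Type*} (Emb : D → Bool) (T0 T1 Tp : D → D)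
    (w : D → ℝ) (p : ℝ) : ℕ → D → ℝ
  | 0 => w
  | n + 1 => fun ξ =>
    if Emb ξ then
      w ξ + p * EtotAux Emb T0 T1 Tp w p n (T1 ξ) + (1 - p) * EtotAux Emb T0 T1 Tp w p n (T0 ξ)
    else w ξ + EtotAux Emb T0 T1 Tp w p n (Tp ξ)

/-- Total expectation `Ê_P` for `P ≥ 1`. -/
noncomputable def Etot {D : Type*} (Emb : D → Bool) (T0 T1 Tp : D → D)
    (w : D → ℝ) (p : ℝ) (P : ℕ) : D → ℝ :=
  EtotAux Emb T0 T1 Tp w p (P - 1)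

instance {D : Type*} (Emb : D → Bool) (T0 T1 Tp : D → D) (ξ : D) (c : ℕ → Bool) (n : ℕ) :
    Decidable (canonical Emb T0 T1 Tp ξ c n) := by
  unfold canonical; infer_instance

/-- The co-occurrence matrix update operator. -/
noncomputable def Uop {D : Type*} [Fintype D] [DecidableEq D] (Emb : D → Bool)
    (T0 T1 Tp : D → D) (p : ℝ) (C : D → ℝ) : D → ℝ := fun η =>
  (∑ ξ ∈ Finset.univ.filter (fun ξ => Emb ξ = true ∧ T0 ξ = η), (1 - p) * C ξ) +
  (∑ ξ ∈ Finset.univ.filter (fun ξ => Emb ξ = true ∧ T1 ξ = η), p * C ξ) +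
  (∑ ξ ∈ Finset.univ.filter (fun ξ => ¬(Emb ξ = true) ∧ Tp ξ = η), C ξ)

lemma Uop_adjoint {D : Type*} [Fintype D] [DecidableEq D] (Emb : D → Bool)
    (T0 T1 Tp : D → D) (p : ℝ) (C : D → ℝ) (f : D → ℝ) :
    ∑ η : D, Uop Emb T0 T1 Tp p C η * f η =
      ∑ ξ : D, C ξ *
        (if Emb ξ then (1 - p) * f (T0 ξ) + p * f (T1 ξ) else f (Tp ξ)) := by
  unfold Uop
  simp only [add_mul, Finset.sum_add_distrib, Finset.sum_mul, Finset.sum_filter]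
  rw [Finset.sum_comm, Finset.sum_comm (γ := D) (s := Finset.univ)
    (f := fun η ξ => (if Emb ξ = true ∧ T1 ξ = η then p * C ξ else 0) * f η),
    Finset.sum_comm (γ := D) (s := Finset.univ)
    (f := fun η ξ => (if ¬Emb ξ = true ∧ Tp ξ = η then C ξ else 0) * f η)]
  rw [← Finset.sum_add_distrib, ← Finset.sum_add_distrib]
  refine Finset.sum_congr rfl fun ξ _ => ?_
  by_cases h : Emb ξ = true <;>
    simp [h, Finset.sum_ite_eq' Finset.univ, mul_comm, mul_assoc, mul_left_comm] <;> ring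

theorem stmt_9 {D : Type*} [Fintype D] [DecidableEq D] (Emb : D → Bool)
    (T0 T1 Tp : D → D) (w : D → ℝ) (p : ℝ) (hp0 : 0 ≤ p) (hp1 : p ≤ 1)
    (C0 : D → ℝ) (k : ℕ) :
    ∑ ξ : D, (Uop Emb T0 T1 Tp p)^[k] C0 ξ * w ξ =
      ∑ ξ : D, C0 ξ * Estage Emb T0 T1 Tp w p k ξ := by
  induction k generalizing C0 with
  | zero => simp [Estage]
  | succ k ih =>
    rw [Function.iterate_succ_apply, ih, Uop_adjoint]
    refine Finset.sum_congr rfl fun ξ _ => ?_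
    simp [Estage]
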